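/- Let V be an n-dimensional real inner product space and let A be a covariant 4-tensor on V satisfying the pairwise symmetries A_{kijl} = A_{kjil} = A_{lijk} for all indices. Define R_{kijl} := (1/4)(A_{kijl} - A_{ikjl} - A_{kilj} + A_{iklj}). Then R is antisymmetric in its first two indices and in its last two indices, satisfies R_{kijl} = R_{jlki}, and satisfies the first Bianchi identity R_{kijl} + R_{ijkl} + R_{jkil} = 0. -/
import Mathlib


/-- The alternation `P(A)` of a pairwise-symmetric covariant 4-tensor has all the
algebraic symmetries of the Riemann curvature tensor. -/
theorem stmt_0 (n : ℕ) (A R : Fin n → Fin n → Fin n → Fin n → ℝ)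
    (hsym1 : ∀ k i j l, A k i j l = A k j i l)
    (hsym2 : ∀ k i j l, A k i j l = A l i j k)
    (hR : ∀ k i j l, R k i j l
        = (1/4 : ℝ) * (A k i j l - A i k j l - A k i l j + A i k l j)) :
    (∀ k i j l, R k i j l = - R i k j l) ∧
    (∀ k i j l, R k i j l = - R k i l j) ∧
    (∀ k i j l, R k i j l = R j l k i) ∧
    (∀ k i j l, R k i j l + R i j k l + R j k i l = 0) := by
  refine ⟨fun k i j l => ?_, fun k i j l => ?_, fun k i j l => ?_, fun k i j l => ?_⟩
  · rw [hR k i j l, hR i k j l]; ring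
  · rw [hR k i j l, hR k i l j]; ring
  · rw [hR k i j l, hR j l k i]
    have h1 : A j l k i = A i k l j := by rw [hsym2 j l k i, hsym1 i l k j]
    have h2 : A l j k i = A i k j l := by rw [hsym2 l j k i, hsym1 i j k l]
    have h3 : A j l i k = A k i l j := by rw [hsym2 j l i k, hsym1 k l i j]
    have h4 : A l j i k = A k i j l := by rw [hsym2 l j i k, hsym1 k j i l]
    rw [h1, h2, h3, h4]; ring
  · rw [hR k i j l, hR i j k l, hR j k i l]
    linarith [hsym1 k j i l, hsym1 i j k l, hsym1 j i k l,
      hsym2 j i l k, hsym2 j k l i, hsym2 k j l i]
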